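/- Let N be a norm on ℝ², let P : [0, L] → ℝ² and Q : [0, M] → ℝ² be the unit-speed parametrizations under N of two polygonal curves, and define h(z) := N(P(z₁) − Q(z₂)) for z ∈ [0,L] × [0,M]. Let x_r, y_r, x, y ∈ [0,L] × [0,M] with x_r ≤ y_r and x ≤ y componentwise, x_r → x and y_r → y. Let f_r be an (x_r, y_r)-path for each r ∈ ℕ and let f be an (x,y)-path such that for every s ∈ (x₁+x₂, y₁+y₂), s eventually lies in the domain of f_r and f_r(s) → f(s) as r → ∞. Then the costs converge: cost(f_r) → cost(f), where costs are taken with respect to h. -/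

import Mathlib

/-!
The integrands `s ↦ h (f_r s, s - f_r s)` are uniformly bounded: a norm on `ℝ²` is convex, hence
continuous, so `h` is continuous on the compact box `[0, L] × [0, M]`, and every path stays in its
box. They converge to `h (f s, s - f s)` at every `s` inside `(x₁ + x₂, y₁ + y₂)` by continuity of
`h`, and since the endpoints of the parameter intervals converge, the integrals over the moving
intervals differ from the limit only on vanishing neighbourhoods of the two endpoints. Dominated
convergence applied to the integrands extended by zero concludes.
-/

/-- `N : ℝ × ℝ → ℝ` is a norm on `ℝ²`. -/
def IsNorm (N : ℝ × ℝ → ℝ) : Prop :=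
  (∀ z : ℝ × ℝ, 0 ≤ N z) ∧
  (∀ z : ℝ × ℝ, N z = 0 ↔ z = 0) ∧
  (∀ (c : ℝ) (z : ℝ × ℝ), N (c • z) = |c| * N z) ∧
  (∀ z w : ℝ × ℝ, N (z + w) ≤ N z + N w)

/-- `P` is the unit-speed parametrization under the norm `N` of the polygonal curve
with vertices `p 0, …, p n` (consecutive vertices distinct) and arc lengths `L`. -/
def IsUnitSpeedParam (N : ℝ × ℝ → ℝ) (n : ℕ) (p : ℕ → ℝ × ℝ) (L : ℕ → ℝ)
    (P : ℝ → ℝ × ℝ) : Prop :=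
  (∀ i : ℕ, 1 ≤ i → i ≤ n → p i ≠ p (i - 1)) ∧
  (∀ i : ℕ, L i = ∑ i' ∈ Finset.Icc 1 i, N (p i' - p (i' - 1))) ∧
  (∀ i : ℕ, 1 ≤ i → i ≤ n → ∀ s ∈ Set.Icc (L (i - 1)) (L i),
    P s = p (i - 1) + ((s - L (i - 1)) / N (p i - p (i - 1))) • (p i - p (i - 1)))

/-- An `(x,y)`-path: a function `f : [x₁+x₂, y₁+y₂] → ℝ` with `f(x₁+x₂) = x₁`,
`f(y₁+y₂) = y₁` such that both `f` and `s ↦ s − f s` are monotone non-decreasing. -/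
def IsPath (x y : ℝ × ℝ) (f : ℝ → ℝ) : Prop :=
  x.1 ≤ y.1 ∧ x.2 ≤ y.2 ∧
  f (x.1 + x.2) = x.1 ∧ f (y.1 + y.2) = y.1 ∧
  MonotoneOn f (Set.Icc (x.1 + x.2) (y.1 + y.2)) ∧
  MonotoneOn (fun s => s - f s) (Set.Icc (x.1 + x.2) (y.1 + y.2))

/-- The cost of an `(x,y)`-path `f` with respect to `h`. -/
noncomputable def pathCost (h : ℝ × ℝ → ℝ) (x y : ℝ × ℝ) (f : ℝ → ℝ) : ℝ :=
  ∫ s in (x.1 + x.2)..(y.1 + y.2), h (f s, s - f s)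

open Filter Topology MeasureTheory Set

lemma IsNorm.convexOn {N : ℝ × ℝ → ℝ} (hN : IsNorm N) : ConvexOn ℝ univ N := by
  refine ⟨convex_univ, fun z _ w _ a b ha hb _ => ?_⟩
  calc N (a • z + b • w) ≤ N (a • z) + N (b • w) := hN.2.2.2 _ _
    _ = a • N z + b • N w := by
      rw [hN.2.2.1, hN.2.2.1, abs_of_nonneg ha, abs_of_nonneg hb, smul_eq_mul, smul_eq_mul]

lemma IsNorm.continuous {N : ℝ × ℝ → ℝ} (hN : IsNorm N) : Continuous N :=
  continuousOn_univ.mp (hN.convexOn.continuousOn isOpen_univ)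

namespace IsUnitSpeedParam

variable {N : ℝ × ℝ → ℝ} {n : ℕ} {p : ℕ → ℝ × ℝ} {L : ℕ → ℝ} {P : ℝ → ℝ × ℝ}

lemma arcLength_zero (hP : IsUnitSpeedParam N n p L P) : L 0 = 0 := by
  simp [hP.2.1 0]

lemma arcLength_succ (hP : IsUnitSpeedParam N n p L P) (i : ℕ) :
    L (i + 1) = L i + N (p (i + 1) - p i) := by
  rw [hP.2.1, hP.2.1, Finset.sum_Icc_succ_top (by omega), Nat.add_sub_cancel]

lemma monotone_arcLength (hN : IsNorm N) (hP : IsUnitSpeedParam N n p L P) : Monotone L :=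
  monotone_nat_of_le_succ fun i => by
    rw [hP.arcLength_succ]
    linarith [hN.1 (p (i + 1) - p i)]

lemma continuousOn_segment (hP : IsUnitSpeedParam N n p L P) {i : ℕ} (hi : i < n) :
    ContinuousOn P (Icc (L i) (L (i + 1))) := by
  have hP_eq := hP.2.2 (i + 1) (by omega) hi
  rw [Nat.add_sub_cancel] at hP_eq
  have : ContinuousOn (fun s => p i + ((s - L i) / N (p (i + 1) - p i)) • (p (i + 1) - p i))
      (Icc (L i) (L (i + 1))) := by fun_prop
  exact this.congr hP_eq

lemma continuousOn (hN : IsNorm N) (hP : IsUnitSpeedParam N n p L P) :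
    ContinuousOn P (Icc 0 (L n)) := by
  suffices ∀ k ≤ n, ContinuousOn P (Icc 0 (L k)) from this n le_rfl
  intro k
  induction k with
  | zero =>
    intro _
    rw [hP.arcLength_zero, Icc_self]
    exact continuousOn_singleton _ _
  | succ k ih =>
    intro hk
    have hL := hP.monotone_arcLength hN
    rw [← Icc_union_Icc_eq_Icc (hP.arcLength_zero ▸ hL k.zero_le) (hL k.le_succ)]
    exact (ih (by omega)).union_of_isClosed (hP.continuousOn_segment hk) isClosed_Icc isClosed_Icc

end IsUnitSpeedParam

lemma continuousOn_norm_sub_of_isUnitSpeedParam {N : ℝ × ℝ → ℝ} (hN : IsNorm N) {n m : ℕ}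
    {p q : ℕ → ℝ × ℝ} {L M : ℕ → ℝ} {P Q : ℝ → ℝ × ℝ}
    (hP : IsUnitSpeedParam N n p L P) (hQ : IsUnitSpeedParam N m q M Q) :
    ContinuousOn (fun z : ℝ × ℝ => N (P z.1 - Q z.2)) (Icc (0, 0) (L n, M m)) := by
  refine hN.continuous.comp_continuousOn (ContinuousOn.sub ?_ ?_)
  · exact (hP.continuousOn hN).comp continuous_fst.continuousOn fun z hz => ⟨hz.1.1, hz.2.1⟩
  · exact (hQ.continuousOn hN).comp continuous_snd.continuousOn fun z hz => ⟨hz.1.2, hz.2.2⟩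

namespace IsPath

variable {x y : ℝ × ℝ} {f : ℝ → ℝ}

lemma mk_mem_Icc (hf : IsPath x y f) {s : ℝ} (hs : s ∈ Icc (x.1 + x.2) (y.1 + y.2)) :
    (f s, s - f s) ∈ Icc x y := by
  obtain ⟨hxy₁, hxy₂, hfx, hfy, hmono, hmono_sub⟩ := hf
  have hx : x.1 + x.2 ∈ Icc (x.1 + x.2) (y.1 + y.2) := ⟨le_rfl, by linarith⟩
  have hy : y.1 + y.2 ∈ Icc (x.1 + x.2) (y.1 + y.2) := ⟨by linarith, le_rfl⟩
  have h₁ := hmono hx hs hs.1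
  have h₂ := hmono hs hy hs.2
  have h₃ := hmono_sub hx hs hs.1
  have h₄ := hmono_sub hs hy hs.2
  simp only [hfx, hfy] at h₁ h₂ h₃ h₄
  exact ⟨⟨h₁, by linarith⟩, ⟨h₂, by linarith⟩⟩

lemma lipschitzOnWith (hf : IsPath x y f) :
    LipschitzOnWith 1 f (Icc (x.1 + x.2) (y.1 + y.2)) := by
  obtain ⟨-, -, -, -, hmono, hmono_sub⟩ := hf
  have key : ∀ s ∈ Icc (x.1 + x.2) (y.1 + y.2), ∀ t ∈ Icc (x.1 + x.2) (y.1 + y.2),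
      s ≤ t → |f t - f s| ≤ t - s := fun s hs t ht hst => by
    have h₁ := hmono hs ht hst
    have h₂ := hmono_sub hs ht hst
    rw [abs_le]
    constructor <;> linarith
  refine LipschitzOnWith.of_dist_le_mul fun s hs t ht => ?_
  rw [NNReal.coe_one, one_mul, Real.dist_eq, Real.dist_eq]
  rcases le_total s t with hst | hts
  · rw [abs_sub_comm, abs_sub_comm s, abs_of_nonneg (sub_nonneg.2 hst)]
    exact key s hs t ht hst
  · rw [abs_of_nonneg (sub_nonneg.2 hts)]
    exact key t ht s hs hts

lemma continuousOn (hf : IsPath x y f) :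
    ContinuousOn (fun s => (f s, s - f s)) (Icc (x.1 + x.2) (y.1 + y.2)) :=
  hf.lipschitzOnWith.continuousOn.prodMk (continuousOn_id.sub hf.lipschitzOnWith.continuousOn)

end IsPath

section MovingBounds

variable {ι : Type*} {l : Filter ι} {A B : ι → ℝ} {a b : ℝ}

lemma eventually_mem_Ioo_of_tendsto (hA : Tendsto A l (𝓝 a)) (hB : Tendsto B l (𝓝 b))
    {s : ℝ} (hs : s ∈ Ioo a b) : ∀ᶠ i in l, s ∈ Ioo (A i) (B i) :=
  (hA.eventually (eventually_lt_nhds hs.1)).and (hB.eventually (eventually_gt_nhds hs.2))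

lemma tendsto_indicator_Ioc_of_tendsto {F : ι → ℝ → ℝ} {g : ℝ → ℝ}
    (hA : Tendsto A l (𝓝 a)) (hB : Tendsto B l (𝓝 b))
    (hF : ∀ s ∈ Ioo a b, Tendsto (fun i => F i s) l (𝓝 (g s)))
    {s : ℝ} (hsa : s ≠ a) (hsb : s ≠ b) :
    Tendsto (fun i => (Ioc (A i) (B i)).indicator (F i) s) l (𝓝 ((Ioc a b).indicator g s)) := by
  by_cases hs : s ∈ Ioo a b
  · rw [indicator_of_mem (Ioo_subset_Ioc_self hs)]
    refine (hF s hs).congr' ?_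
    filter_upwards [eventually_mem_Ioo_of_tendsto hA hB hs] with i hi
    exact (indicator_of_mem (Ioo_subset_Ioc_self hi) _).symm
  · have hs_out : s < a ∨ b < s := by
      rw [mem_Ioo, not_and_or, not_lt, not_lt] at hs
      exact hs.imp (lt_of_le_of_ne · hsa) (lt_of_le_of_ne' · hsb)
    have hev : ∀ᶠ i in l, s ∉ Ioc (A i) (B i) := by
      rcases hs_out with hsa' | hbs
      · filter_upwards [hA.eventually (eventually_gt_nhds hsa')] with i hi hmem
        exact hi.not_gt hmem.1
      · filter_upwards [hB.eventually (eventually_lt_nhds hbs)] with i hi hmem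
        exact hi.not_ge hmem.2
    rw [indicator_of_notMem fun hmem => hs ⟨hmem.1, lt_of_le_of_ne hmem.2 hsb⟩]
    refine tendsto_const_nhds.congr' ?_
    filter_upwards [hev] with i hi
    exact (indicator_of_notMem hi _).symm

theorem tendsto_intervalIntegral_of_dominated_of_tendsto_bounds [l.IsCountablyGenerated]
    [l.NeBot] {F : ι → ℝ → ℝ} {g : ℝ → ℝ} {C : ℝ} (hAB : ∀ i, A i ≤ B i)
    (hA : Tendsto A l (𝓝 a)) (hB : Tendsto B l (𝓝 b))
    (hF_meas : ∀ i, AEStronglyMeasurable (F i) (volume.restrict (Ioc (A i) (B i))))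
    (hF_bound : ∀ i, ∀ s ∈ Ioc (A i) (B i), ‖F i s‖ ≤ C)
    (hF_lim : ∀ s ∈ Ioo a b, Tendsto (fun i => F i s) l (𝓝 (g s))) :
    Tendsto (fun i => ∫ s in A i..B i, F i s) l (𝓝 (∫ s in a..b, g s)) := by
  have hab : a ≤ b := le_of_tendsto_of_tendsto' hA hB hAB
  simp_rw [intervalIntegral.integral_of_le (hAB _), intervalIntegral.integral_of_le hab,
    ← integral_indicator measurableSet_Ioc]
  refine tendsto_integral_filter_of_dominated_convergence
    ((Icc (a - 1) (b + 1)).indicator fun _ => |C|) ?_ ?_ ?_ ?_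
  · exact .of_forall fun i => (aestronglyMeasurable_indicator_iff measurableSet_Ioc).2 (hF_meas i)
  · filter_upwards [hA.eventually (eventually_gt_nhds (sub_one_lt a)),
      hB.eventually (eventually_lt_nhds (lt_add_one b))] with i hAi hBi
    refine .of_forall fun s => ?_
    by_cases hs : s ∈ Ioc (A i) (B i)
    · have hs' : s ∈ Icc (a - 1) (b + 1) := ⟨by linarith [hs.1], by linarith [hs.2]⟩
      rw [indicator_of_mem hs, indicator_of_mem hs']
      exact (hF_bound i s hs).trans (le_abs_self C)
    · rw [indicator_of_notMem hs, norm_zero]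
      exact indicator_nonneg (fun _ _ => abs_nonneg C) s
  · exact (integrable_indicator_iff measurableSet_Icc).2 (integrableOn_const measure_Icc_lt_top.ne)
  · filter_upwards [Measure.ae_ne volume a, Measure.ae_ne volume b] with s hsa hsb
    exact tendsto_indicator_Ioc_of_tendsto hA hB hF_lim hsa hsb

end MovingBounds

theorem path_costs_converge_general
    (N : ℝ × ℝ → ℝ) (hN : IsNorm N)
    (n m : ℕ) (p q : ℕ → ℝ × ℝ) (L M : ℕ → ℝ) (P Q : ℝ → ℝ × ℝ)
    (hP : IsUnitSpeedParam N n p L P) (hQ : IsUnitSpeedParam N m q M Q)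
    (h : ℝ × ℝ → ℝ) (hh : ∀ z : ℝ × ℝ, h z = N (P z.1 - Q z.2))
    (xr yr : ℕ → ℝ × ℝ) (x y : ℝ × ℝ)
    (hxrbox : ∀ r : ℕ, xr r ∈ Set.Icc ((0 : ℝ), (0 : ℝ)) (L n, M m))
    (hyrbox : ∀ r : ℕ, yr r ∈ Set.Icc ((0 : ℝ), (0 : ℝ)) (L n, M m))
    (hxconv : Tendsto xr atTop (𝓝 x))
    (hyconv : Tendsto yr atTop (𝓝 y))
    (fr : ℕ → ℝ → ℝ) (hfr : ∀ r : ℕ, IsPath (xr r) (yr r) (fr r))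
    (f : ℝ → ℝ)
    (hptwise : ∀ s ∈ Set.Ioo (x.1 + x.2) (y.1 + y.2),
      Tendsto (fun r => fr r s) atTop (𝓝 (f s))) :
    Tendsto (fun r => pathCost h (xr r) (yr r) (fr r)) atTop
      (𝓝 (pathCost h x y f)) := by
  set K := Icc ((0 : ℝ), (0 : ℝ)) (L n, M m)
  have hh_cont : ContinuousOn h K :=
    (continuousOn_norm_sub_of_isUnitSpeedParam hN hP hQ).congr fun z _ => hh z
  obtain ⟨C, hC⟩ := isCompact_Icc.exists_bound_of_continuousOn hh_cont
  have hmemK : ∀ r, ∀ s ∈ Icc ((xr r).1 + (xr r).2) ((yr r).1 + (yr r).2),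
      (fr r s, s - fr r s) ∈ K := fun r s hs =>
    Icc_subset_Icc (hxrbox r).1 (hyrbox r).2 ((hfr r).mk_mem_Icc hs)
  have hA := hxconv.fst_nhds.add hxconv.snd_nhds
  have hB := hyconv.fst_nhds.add hyconv.snd_nhds
  refine tendsto_intervalIntegral_of_dominated_of_tendsto_bounds
    (fun r => add_le_add (hfr r).1 (hfr r).2.1) hA hB (fun r => ?_)
    (fun r s hs => hC _ (hmemK r s (Ioc_subset_Icc_self hs))) (fun s hs => ?_)
  · exact ((hh_cont.comp (hfr r).continuousOn (hmemK r)).mono Ioc_subset_Icc_self)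
      |>.aestronglyMeasurable measurableSet_Ioc
  · have hK_ev : ∀ᶠ r in atTop, (fr r s, s - fr r s) ∈ K := by
      filter_upwards [eventually_mem_Ioo_of_tendsto hA hB hs] with r hr
      exact hmemK r s (Ioo_subset_Icc_self hr)
    have hconv : Tendsto (fun r => (fr r s, s - fr r s)) atTop (𝓝 (f s, s - f s)) :=
      (hptwise s hs).prodMk_nhds (tendsto_const_nhds.sub (hptwise s hs))
    have hlim_mem : (f s, s - f s) ∈ K := isClosed_Icc.mem_of_tendsto hconv hK_ev
    exact (hh_cont _ hlim_mem).tendsto.comp (tendsto_nhdsWithin_iff.2 ⟨hconv, hK_ev⟩)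

/-- If `(x_r, y_r)`-paths `f_r` converge pointwise (on the open
parameter interval, eventually lying in the domains) to an `(x,y)`-path `f`, with
`x_r → x` and `y_r → y`, then the costs converge: `cost(f_r) → cost(f)`, where
`h(z) = N(P(z₁) − Q(z₂))` for unit-speed parametrizations `P, Q` of two polygonal
curves under a norm `N`. -/
theorem path_costs_converge
    (N : ℝ × ℝ → ℝ) (hN : IsNorm N)
    (n m : ℕ) (p q : ℕ → ℝ × ℝ) (L M : ℕ → ℝ) (P Q : ℝ → ℝ × ℝ)
    (hP : IsUnitSpeedParam N n p L P) (hQ : IsUnitSpeedParam N m q M Q)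
    (h : ℝ × ℝ → ℝ) (hh : ∀ z : ℝ × ℝ, h z = N (P z.1 - Q z.2))
    (xr yr : ℕ → ℝ × ℝ) (x y : ℝ × ℝ)
    (hxrbox : ∀ r : ℕ, xr r ∈ Set.Icc ((0 : ℝ), (0 : ℝ)) (L n, M m))
    (hyrbox : ∀ r : ℕ, yr r ∈ Set.Icc ((0 : ℝ), (0 : ℝ)) (L n, M m))
    (hxbox : x ∈ Set.Icc ((0 : ℝ), (0 : ℝ)) (L n, M m))
    (hybox : y ∈ Set.Icc ((0 : ℝ), (0 : ℝ)) (L n, M m))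
    (hxryr : ∀ r : ℕ, (xr r).1 ≤ (yr r).1 ∧ (xr r).2 ≤ (yr r).2)
    (hxy : x.1 ≤ y.1 ∧ x.2 ≤ y.2)
    (hxconv : Tendsto xr atTop (𝓝 x))
    (hyconv : Tendsto yr atTop (𝓝 y))
    (fr : ℕ → ℝ → ℝ) (hfr : ∀ r : ℕ, IsPath (xr r) (yr r) (fr r))
    (f : ℝ → ℝ) (hf : IsPath x y f)
    (hdom : ∀ s ∈ Set.Ioo (x.1 + x.2) (y.1 + y.2),
      ∀ᶠ r in atTop, s ∈ Set.Icc ((xr r).1 + (xr r).2) ((yr r).1 + (yr r).2))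
    (hptwise : ∀ s ∈ Set.Ioo (x.1 + x.2) (y.1 + y.2),
      Tendsto (fun r => fr r s) atTop (𝓝 (f s))) :
    Tendsto (fun r => pathCost h (xr r) (yr r) (fr r)) atTop
      (𝓝 (pathCost h x y f)) :=
  path_costs_converge_general N hN n m p q L M P Q hP hQ h hh xr yr x y hxrbox hyrbox hxconv hyconv
    fr hfr f hptwise
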